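/- arXiv:2102.00543 — 6 statements merged into one kernel-verified Lean document; each statement's English description precedes it below -/
import Mathlib

section
/- With A_i^[k] = ∏_{s:(i,s)∈Ω_k} p_{i,s} and B_j^[k] = ∏_{s:(s,j)∈Ω_k} p_{s,j} for an injective prime indexing p on Ω_k, one has gcd(A_i^[k], B_j^[k]) = p_{i,j} if max(1,|i|)·max(1,|j|) ≤ k, and gcd(A_i^[k], B_j^[k]) = 1 otherwise. -/
/-! Rewriting `A k p i` and `B k p j` as products of `p` over the `i`-th row and the `j`-th
column of `Ω_k`, the gcd is the product over their intersection, because distinct points of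
`Ω_k` carry distinct, hence coprime, primes. Row `i` and column `j` meet exactly in `(i, j)`
when that point lies in `Ω_k`, and not at all otherwise. -/

/-- Ω_k as a finite set of lattice points. -/
noncomputable def OmegaF (k : ℕ) : Finset (ℤ × ℤ) :=
  (Finset.Icc (-(k : ℤ), -(k : ℤ)) ((k : ℤ), (k : ℤ))).filter
    (fun p => max 1 |p.1| * max 1 |p.2| ≤ (k : ℤ))

/-- A_i^[k] = ∏_{s : (i,s) ∈ Ω_k} p_{i,s}. -/
noncomputable def A (k : ℕ) (p : ℤ × ℤ → ℕ) (i : ℤ) : ℕ :=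
  ∏ s ∈ (Finset.Icc (-(k : ℤ)) (k : ℤ)).filter (fun s => max 1 |i| * max 1 |s| ≤ (k : ℤ)),
    p (i, s)

/-- B_j^[k] = ∏_{s : (s,j) ∈ Ω_k} p_{s,j}. -/
noncomputable def B (k : ℕ) (p : ℤ × ℤ → ℕ) (j : ℤ) : ℕ :=
  ∏ s ∈ (Finset.Icc (-(k : ℤ)) (k : ℤ)).filter (fun s => max 1 |s| * max 1 |j| ≤ (k : ℤ)),
    p (s, j)

/-- P_k = ∏_{(i,j) ∈ Ω_k} p_{i,j}. -/
noncomputable def P (k : ℕ) (p : ℤ × ℤ → ℕ) : ℕ := ∏ q ∈ OmegaF k, p q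

open Finset

namespace Nat

variable {ι : Type*} {U : Set ι} {p : ι → ℕ}

theorem coprime_prod_prod_of_disjoint (hprime : ∀ q ∈ U, (p q).Prime) (hinj : Set.InjOn p U)
    {S T : Finset ι} (hS : ↑S ⊆ U) (hT : ↑T ⊆ U) (hST : Disjoint S T) :
    Coprime (∏ q ∈ S, p q) (∏ q ∈ T, p q) := by
  refine Coprime.prod_left fun a ha ↦ Coprime.prod_right fun b hb ↦ ?_
  rw [coprime_primes (hprime a (hS ha)) (hprime b (hT hb))]
  exact fun hab ↦ disjoint_left.1 hST ha (hinj (hS ha) (hT hb) hab ▸ hb)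

theorem gcd_prod_prod_eq_prod_inter [DecidableEq ι] (hprime : ∀ q ∈ U, (p q).Prime)
    (hinj : Set.InjOn p U) {S T : Finset ι} (hS : ↑S ⊆ U) (hT : ↑T ⊆ U) :
    gcd (∏ q ∈ S, p q) (∏ q ∈ T, p q) = ∏ q ∈ S ∩ T, p q := by
  have hcop : Coprime (∏ q ∈ S \ T, p q) (∏ q ∈ T \ S, p q) :=
    coprime_prod_prod_of_disjoint hprime hinj (subset_trans (by simp) hS)
      (subset_trans (by simp) hT) disjoint_sdiff_sdiff
  rw [← prod_inter_mul_prod_sdiff S T, ← prod_inter_mul_prod_sdiff T S, inter_comm T S,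
    gcd_mul_left, hcop, mul_one]

end Nat

theorem Finset.filter_fst_eq_inter_filter_snd_eq {α β : Type*} [DecidableEq α] [DecidableEq β]
    (s : Finset (α × β)) (a : α) (b : β) :
    s.filter (·.1 = a) ∩ s.filter (·.2 = b) = s.filter (· = (a, b)) := by
  ext ⟨x, y⟩
  simp only [mem_inter, mem_filter, Prod.mk.injEq]
  tauto

section Grid

variable {k : ℕ} {p : ℤ × ℤ → ℕ}

theorem mem_OmegaF {q : ℤ × ℤ} :
    q ∈ OmegaF k ↔ q.1 ∈ Icc (-(k : ℤ)) k ∧ q.2 ∈ Icc (-(k : ℤ)) k ∧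
      max 1 |q.1| * max 1 |q.2| ≤ (k : ℤ) := by
  simp only [OmegaF, mem_filter, mem_Icc, Prod.le_def]
  tauto

theorem A_eq_prod_row {i : ℤ} (hi : i ∈ Icc (-(k : ℤ)) k) :
    A k p i = ∏ q ∈ (OmegaF k).filter (·.1 = i), p q := by
  refine (prod_map _ (Function.Embedding.sectR i ℤ) p).symm.trans
    (congrArg (fun s ↦ ∏ q ∈ s, p q) ?_)
  ext ⟨a, b⟩
  simp only [mem_map, mem_filter, Function.Embedding.sectR_apply, Prod.mk.injEq, mem_OmegaF]
  constructor
  · rintro ⟨s, ⟨hs, hcond⟩, rfl, rfl⟩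
    exact ⟨⟨hi, hs, hcond⟩, rfl⟩
  · rintro ⟨⟨-, hb, hcond⟩, rfl⟩
    exact ⟨b, ⟨hb, hcond⟩, rfl, rfl⟩

theorem B_eq_prod_col {j : ℤ} (hj : j ∈ Icc (-(k : ℤ)) k) :
    B k p j = ∏ q ∈ (OmegaF k).filter (·.2 = j), p q := by
  refine (prod_map _ (Function.Embedding.sectL ℤ j) p).symm.trans
    (congrArg (fun s ↦ ∏ q ∈ s, p q) ?_)
  ext ⟨a, b⟩
  simp only [mem_map, mem_filter, Function.Embedding.sectL_apply, Prod.mk.injEq, mem_OmegaF]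
  constructor
  · rintro ⟨s, ⟨hs, hcond⟩, rfl, rfl⟩
    exact ⟨⟨hs, hj, hcond⟩, rfl⟩
  · rintro ⟨⟨ha, -, hcond⟩, rfl⟩
    exact ⟨a, ⟨ha, hcond⟩, rfl, rfl⟩

end Grid

theorem A_B_gcd_general (k : ℕ) (p : ℤ × ℤ → ℕ)
    (hprime : ∀ q ∈ OmegaF k, (p q).Prime)
    (hinj : Set.InjOn p (OmegaF k))
    (i j : ℤ) (hi : i ∈ Finset.Icc (-(k : ℤ)) (k : ℤ))
    (hj : j ∈ Finset.Icc (-(k : ℤ)) (k : ℤ)) :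
    (max 1 |i| * max 1 |j| ≤ (k : ℤ) → Nat.gcd (A k p i) (B k p j) = p (i, j)) ∧
    (¬ (max 1 |i| * max 1 |j| ≤ (k : ℤ)) → Nat.gcd (A k p i) (B k p j) = 1) := by
  have hgcd : Nat.gcd (A k p i) (B k p j) = ∏ q ∈ (OmegaF k).filter (· = (i, j)), p q := by
    rw [A_eq_prod_row hi, B_eq_prod_col hj, Nat.gcd_prod_prod_eq_prod_inter hprime hinj
      (coe_subset.2 (filter_subset _ _)) (coe_subset.2 (filter_subset _ _)),
      filter_fst_eq_inter_filter_snd_eq]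
  have hmem : (i, j) ∈ OmegaF k ↔ max 1 |i| * max 1 |j| ≤ (k : ℤ) := by
    simp [mem_OmegaF, hi, hj]
  rw [hgcd, filter_eq', ← hmem]
  constructor <;> intro h <;> simp [h]

/-- gcd(A_i^[k], B_j^[k]) = p_{i,j} if max(1,|i|)·max(1,|j|) ≤ k, and = 1 otherwise. -/
theorem A_B_gcd (k : ℕ) (hk : 1 ≤ k) (p : ℤ × ℤ → ℕ)
    (hprime : ∀ q ∈ OmegaF k, (p q).Prime)
    (hinj : Set.InjOn p (OmegaF k))
    (i j : ℤ) (hi : i ∈ Finset.Icc (-(k : ℤ)) (k : ℤ))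
    (hj : j ∈ Finset.Icc (-(k : ℤ)) (k : ℤ)) :
    (max 1 |i| * max 1 |j| ≤ (k : ℤ) → Nat.gcd (A k p i) (B k p j) = p (i, j)) ∧
    (¬ (max 1 |i| * max 1 |j| ≤ (k : ℤ)) → Nat.gcd (A k p i) (B k p j) = 1) :=
  A_B_gcd_general k p hprime hinj i j hi hj
end

section
/- (Erdős, Theorem A, quantitative form) For every ε > 0 there exist arbitrarily large positive integers x and y ≥ x such that gcd(x+i, y+j) > 1 for all pairs of integers i, j with 0 ≤ i, j ≤ (1−ε)(log x / log log x)^{1/2}. -/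
/-!
Give each pair `(i, j)` with `i, j ≤ K` its own prime `p_{ij}`, using the first `M = (K + 1)²`
primes. By the Chinese remainder theorem there is `x` with `p_{ij} ∣ x + i` for all pairs, and then
`y ≥ x` with `p_{ij} ∣ y + j`, so `p_{ij}` divides `gcd (x + i) (y + j)`; moreover `x` can be taken
between `2 ^ M` and `p_M ^ M (N + 2)`. Chebyshev's lower bound for `π` gives `p_M ≤ M ^ α` for any
`α > 1`, hence `log x ≤ α M log M + O(1)` and `log log x ≥ log M + O(1)`. With `c²α < 1` this
yields `c² log x / log log x < M` for large `K`, i.e. the box `i, j ≤ c √(log x / log log x)` lies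
inside `i, j ≤ K`.
-/

open Asymptotics Filter Real Finset Function
open scoped Nat.Prime

namespace Nat

lemma exists_mul_le_and_forall_dvd_add {ι : Type*} (s : Finset ι) (m a : ι → ℕ)
    (hm : ∀ i ∈ s, m i ≠ 0) (hco : Set.Pairwise s (Coprime on m)) (L : ℕ) :
    ∃ x, (∏ i ∈ s, m i) * L ≤ x ∧ x < (∏ i ∈ s, m i) * (L + 1) ∧ ∀ i ∈ s, m i ∣ x + a i := by
  -- `(m - 1) * a ≡ -a [MOD m]`, written without subtraction of residues
  obtain ⟨r, hr_mod, hr_lt⟩ : ∃ r, (∀ i ∈ s, r ≡ (m i - 1) * a i [MOD m i]) ∧ r < ∏ i ∈ s, m i :=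
    ⟨_, (chineseRemainderOfFinset _ m s hm hco).2, chineseRemainderOfFinset_lt_prod _ m hm hco⟩
  refine ⟨r + (∏ i ∈ s, m i) * L, by omega, by rw [mul_add_one]; omega, fun i hi => ?_⟩
  have hPL : (∏ i ∈ s, m i) * L ≡ 0 [MOD m i] :=
    modEq_zero_iff_dvd.2 ((dvd_prod_of_mem m hi).mul_right L)
  have hma : (m i - 1) * a i + a i = m i * a i := by
    rw [Nat.sub_one_mul, Nat.sub_add_cancel (Nat.le_mul_of_pos_left _ (pos_of_ne_zero (hm i hi)))]
  apply modEq_zero_iff_dvd.1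
  calc r + (∏ i ∈ s, m i) * L + a i ≡ (m i - 1) * a i + 0 + a i [MOD m i] :=
        ((hr_mod i hi).add hPL).add_right _
    _ = m i * a i := by rw [add_zero, hma]
    _ ≡ 0 [MOD m i] := modEq_zero_iff_dvd.2 (dvd_mul_right _ _)

lemma two_pow_le_prod_nth_prime (n : ℕ) : 2 ^ n ≤ ∏ k ∈ range n, nth Nat.Prime k := by
  simpa using pow_card_le_prod (range n) (nth Nat.Prime) 2 fun k _ => (prime_nth_prime k).two_le

lemma prod_nth_prime_le (n : ℕ) : ∏ k ∈ range n, nth Nat.Prime k ≤ nth Nat.Prime n ^ n := by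
  simpa using prod_le_pow_card (range n) (nth Nat.Prime) (nth Nat.Prime n) fun k hk =>
    (nth_strictMono infinite_setOfPred_prime (mem_range.1 hk)).le

lemma exists_forall_one_lt_gcd_add {ι : Type*} [Fintype ι] (a b : ι → ℕ) (L : ℕ) :
    ∃ x y, L < x ∧ 2 ^ Fintype.card ι ≤ x ∧
      x ≤ nth Nat.Prime (Fintype.card ι) ^ Fintype.card ι * (L + 2) ∧ x ≤ y ∧
      ∀ t, 1 < Nat.gcd (x + a t) (y + b t) := by
  set e := Fintype.equivFin ι
  set p : ι → ℕ := fun t => nth Nat.Prime (e t)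
  have hp : ∀ t, (p t).Prime := fun t => prime_nth_prime _
  have hco : Set.Pairwise (univ : Finset ι) (Coprime on p) := fun s _ t _ hst =>
    (coprime_primes (hp s) (hp t)).2 fun h => hst (e.injective (Fin.ext
      (nth_injective infinite_setOfPred_prime h)))
  have hP : ∏ t, p t = ∏ k ∈ range (Fintype.card ι), nth Nat.Prime k := by
    rw [← Fin.prod_univ_eq_prod_range]
    exact e.prod_comp fun k => nth Nat.Prime k
  have hp0 : ∀ t ∈ univ, p t ≠ 0 := fun t _ => (hp t).ne_zero
  obtain ⟨x, hx_low, hx_up, hx⟩ := exists_mul_le_and_forall_dvd_add univ p a hp0 hco (L + 1)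
  obtain ⟨y, hy_low, -, hy⟩ := exists_mul_le_and_forall_dvd_add univ p b hp0 hco (x + 1)
  rw [hP] at hx_low hx_up hy_low
  have h2 := two_pow_le_prod_nth_prime (Fintype.card ι)
  have hle := prod_nth_prime_le (Fintype.card ι)
  have hP1 : 1 ≤ ∏ k ∈ range (Fintype.card ι), nth Nat.Prime k := le_trans Nat.one_le_two_pow h2
  refine ⟨x, y, ?_, ?_, ?_, ?_, fun t => ?_⟩
  · nlinarith
  · nlinarith
  · nlinarith
  · nlinarith
  · have hgcd := Nat.dvd_gcd (hx t (mem_univ t)) (hy t (mem_univ t))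
    exact (hp t).one_lt.trans_le (Nat.le_of_dvd (Nat.gcd_pos_of_pos_right _ (by nlinarith)) hgcd)

end Nat

lemma eventually_rpow_lt_primeCounting {γ : ℝ} (hγ : γ < 1) :
    ∀ᶠ x : ℝ in atTop, x ^ γ < π ⌊x⌋₊ := by
  have hpow : (fun x : ℝ => x ^ γ * log x) =o[atTop] id := by
    refine ((isBigO_refl (fun x : ℝ => x ^ γ) atTop).mul_isLittleO
      (isLittleO_log_rpow_atTop (sub_pos.2 hγ))).congr' EventuallyEq.rfl ?_
    filter_upwards [eventually_gt_atTop 0] with x hx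
    rw [← rpow_add hx, add_sub_cancel, rpow_one, id]
  have hlog2 : 0 < log 2 := log_pos one_lt_two
  filter_upwards [(hpow.add isLittleO_log_id_atTop).bound (half_pos hlog2),
    eventually_gt_atTop 4] with x hsmall hx
  have hlogx : 0 < log x := log_pos (by linarith)
  have hsmall' : x ^ γ * log x + log x ≤ log 2 / 2 * x := by
    simpa [abs_of_pos (by linarith : 0 < x)] using (le_abs_self _).trans hsmall
  have hlog_add : log (x + 2) ≤ log 2 + log x := by
    rw [← log_mul two_ne_zero (by linarith)]
    exact log_le_log (by linarith) (by linarith)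
  refine lt_of_lt_of_le ?_ (Chebyshev.pi_ge' (by linarith))
  rw [lt_div_iff₀ hlogx]
  nlinarith

lemma nth_prime_le_rpow {α : ℝ} (hα : 1 < α) :
    ∀ᶠ M : ℕ in atTop, (Nat.nth Nat.Prime M : ℝ) ≤ (M : ℝ) ^ α := by
  have hα0 : α ≠ 0 := by positivity
  have hpow : Tendsto (fun M : ℕ => (M : ℝ) ^ α) atTop atTop :=
    (tendsto_rpow_atTop (by linarith)).comp tendsto_natCast_atTop_atTop
  filter_upwards [hpow.eventually (eventually_rpow_lt_primeCounting (inv_lt_one_of_one_lt₀ hα))]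
    with M hM
  rw [← rpow_mul (Nat.cast_nonneg M), mul_inv_cancel₀ hα0, rpow_one, Nat.cast_lt] at hM
  have hnth : Nat.nth Nat.Prime M < ⌊(M : ℝ) ^ α⌋₊ + 1 := Nat.nth_lt_of_lt_count hM
  exact (Nat.cast_le.2 (Nat.lt_succ_iff.1 hnth)).trans (Nat.floor_le (by positivity))

lemma eventually_mul_mul_log_add_lt {a : ℝ} (ha : a < 1) (B C : ℝ) :
    ∀ᶠ t : ℝ in atTop, a * (t * log t) + B < t * (log t + C) := by
  have h : Tendsto (fun t => t * ((1 - a) * log t + C) - B) atTop atTop :=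
    tendsto_atTop_add_const_right _ _ (tendsto_id.atTop_mul_atTop₀
      (tendsto_atTop_add_const_right _ _ (tendsto_log_atTop.const_mul_atTop (sub_pos.2 ha))))
  filter_upwards [h.eventually_gt_atTop 0] with t ht
  linarith

lemma eventually_sq_mul_log_div_log_log_lt {c : ℝ} (hc0 : 0 < c) (hc1 : c < 1) (B : ℝ) :
    ∀ᶠ M : ℕ in atTop, ∀ x : ℝ, 2 ^ M ≤ x → x ≤ (Nat.nth Nat.Prime M : ℝ) ^ M * B →
      c ^ 2 * (log x / log (log x)) < M := by
  have hc2 : 0 < c ^ 2 := by positivity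
  obtain ⟨α, hα, hα_lt⟩ := exists_between (one_lt_inv₀ hc2 |>.2 (by nlinarith))
  have hcα : c ^ 2 * α < 1 := by simpa [hc2.ne'] using mul_lt_mul_of_pos_left hα_lt hc2
  have hlog2 : 0 < log 2 := log_pos one_lt_two
  have hcast := tendsto_natCast_atTop_atTop (R := ℝ)
  filter_upwards [nth_prime_le_rpow hα,
    hcast.eventually (eventually_mul_mul_log_add_lt hcα (c ^ 2 * log B) (log (log 2))),
    (hcast.atTop_mul_const hlog2).eventually_gt_atTop 1, eventually_gt_atTop 0]
    with M hp hineq hM hM0 x hx_low hx_up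
  have hx0 : 0 < x := lt_of_lt_of_le (by positivity) hx_low
  have hB : 0 < B := pos_of_mul_pos_right (hx0.trans_le hx_up) (by positivity)
  have hp0 : (0 : ℝ) < Nat.nth Nat.Prime M := by exact_mod_cast (Nat.prime_nth_prime M).pos
  have hlogx_low : M * log 2 ≤ log x := by simpa using log_le_log (by positivity) hx_low
  have hlogx_up : log x ≤ α * (M * log M) + log B :=
    calc log x ≤ log ((Nat.nth Nat.Prime M : ℝ) ^ M * B) := log_le_log hx0 hx_up
      _ = M * log (Nat.nth Nat.Prime M) + log B := by
        rw [log_mul (by positivity) hB.ne', log_pow]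
      _ ≤ M * log ((M : ℝ) ^ α) + log B := by gcongr
      _ = α * (M * log M) + log B := by rw [log_rpow (by positivity)]; ring
  have hloglog : log M + log (log 2) ≤ log (log x) := by
    rw [← log_mul (by positivity) hlog2.ne']
    exact log_le_log (by positivity) hlogx_low
  rw [← mul_div_assoc, div_lt_iff₀ (log_pos (hM.trans_le hlogx_low))]
  calc c ^ 2 * log x ≤ c ^ 2 * (α * (M * log M) + log B) := by gcongr
    _ = c ^ 2 * α * (M * log M) + c ^ 2 * log B := by ring
    _ < M * (log M + log (log 2)) := hineq
    _ ≤ M * log (log x) := by gcongr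

/-- Erdős, Theorem A: for every ε > 0 there exist arbitrarily large x and y ≥ x such that
    gcd(x+i, y+j) > 1 for all 0 ≤ i, j ≤ (1−ε)(log x / log log x)^{1/2}. -/
theorem erdos_theorem_A (ε : ℝ) (hε : 0 < ε) (N : ℕ) :
    ∃ x y : ℕ, N ≤ x ∧ 0 < x ∧ x ≤ y ∧
      ∀ i j : ℕ,
        (i : ℝ) ≤ (1 - ε) * Real.sqrt (Real.log x / Real.log (Real.log x)) →
        (j : ℝ) ≤ (1 - ε) * Real.sqrt (Real.log x / Real.log (Real.log x)) →
        1 < Nat.gcd (x + i) (y + j) := by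
  set c := max (1 - ε) (1 / 2)
  have hc0 : 0 < c := lt_max_of_lt_right (by norm_num)
  have hc1 : c < 1 := max_lt (by linarith) (by norm_num)
  have hsq : Tendsto (fun K : ℕ => (K + 1) * (K + 1)) atTop atTop :=
    (tendsto_add_atTop_nat 1).atTop_mul_atTop₀ (tendsto_add_atTop_nat 1)
  obtain ⟨K, hK⟩ := (hsq.eventually (eventually_sq_mul_log_div_log_log_lt hc0 hc1 (N + 2))).exists
  obtain ⟨x, y, hNx, hx_low, hx_up, hxy, hgcd⟩ :=
    Nat.exists_forall_one_lt_gcd_add (ι := Fin (K + 1) × Fin (K + 1)) (·.1) (·.2) N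
  simp only [Fintype.card_prod, Fintype.card_fin] at hx_low hx_up
  have hc_sq := hK x (by exact_mod_cast hx_low) (by exact_mod_cast hx_up)
  have hbox : (1 - ε) * √(log x / log (log x)) < K + 1 :=
    calc (1 - ε) * √(log x / log (log x)) ≤ c * √(log x / log (log x)) := by
          gcongr; exact le_max_left _ _
      _ = √(c ^ 2 * (log x / log (log x))) := by rw [sqrt_mul (sq_nonneg c), sqrt_sq hc0.le]
      _ < K + 1 := (sqrt_lt' (by positivity)).2 (by push_cast at hc_sq; linarith)
  refine ⟨x, y, hNx.le, by omega, hxy, fun i j hi hj => ?_⟩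
  exact hgcd (⟨i, by exact_mod_cast hi.trans_lt hbox⟩, ⟨j, by exact_mod_cast hj.trans_lt hbox⟩)
end

section
/- (Erdős, Theorem B) There exists a positive constant c such that for all positive integers x ≤ y with x sufficiently large, there exists a pair of integers i, j with 0 ≤ i, j ≤ c·log x / log log x such that gcd(x+i, y+j) = 1. -/
open Finset Real

/-! If every pair `(i, j) ∈ [0, k]²` had `gcd (x + i) (y + j) > 1`, charge each pair to a common
prime `p`. A prime `p ≤ k` divides at most `k / p + 1` of the `x + i` and of the `y + j`, and
`∑_{2 ≤ n ≤ k} (k / n + 1)² ≤ (3/4) k² + O(k)` because `∑_{n ≥ 2} 1 / n² ≤ 2/3`. A prime `p > k`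
divides at most one `y + j`, while each `x + i` has at most `log_k (x + k)` prime factors above `k`,
so these primes are charged at most `(k + 1) log_k (x + k)` pairs. For `k ≈ 32 log x / log log x`
we get `log_k (x + k) ≤ (k + 1) / 8`, and the two counts fall short of `(k + 1)²`. -/

def dvdShifts (x k p : ℕ) : Finset ℕ := {i ∈ range (k + 1) | p ∣ x + i}

-- All these shifts are congruent modulo `p`, so `i ↦ i / p` is injective on them.
lemma card_dvdShifts_le (x k p : ℕ) : #(dvdShifts x k p) ≤ k / p + 1 := by
  have hmaps : ∀ i ∈ dvdShifts x k p, i / p ∈ range (k / p + 1) := by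
    intro i hi
    simp only [dvdShifts, mem_filter, mem_range] at hi
    exact mem_range.2 (Nat.lt_succ_of_le (Nat.div_le_div_right (Nat.lt_succ_iff.1 hi.1)))
  have hinj : Set.InjOn (· / p) (dvdShifts x k p) := by
    intro a ha b hb hab
    simp only [dvdShifts, coe_filter, mem_range, Set.mem_ofPred_eq] at ha hb
    have hmod : a % p = b % p :=
      Nat.ModEq.add_left_cancel' x ((Nat.modEq_zero_iff_dvd.2 ha.2).trans
        (Nat.modEq_zero_iff_dvd.2 hb.2).symm)
    rw [← Nat.div_add_mod a p, ← Nat.div_add_mod b p, hmod, show a / p = b / p from hab]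
  simpa using card_le_card_of_injOn _ hmaps hinj

lemma card_dvdShifts_le_one (x : ℕ) {k p : ℕ} (hkp : k < p) : #(dvdShifts x k p) ≤ 1 := by
  simpa [Nat.div_eq_of_lt hkp] using card_dvdShifts_le x k p

lemma card_primeFactors_filter_lt_le {k : ℕ} (hk : 1 < k) (n : ℕ) :
    #{p ∈ n.primeFactors | k < p} ≤ Nat.log k n := by
  rcases eq_or_ne n 0 with rfl | hn
  · simp
  refine (Nat.le_log_iff_pow_le hk hn).2 ?_
  calc k ^ #{p ∈ n.primeFactors | k < p}
      ≤ ∏ p ∈ {p ∈ n.primeFactors | k < p}, p :=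
        pow_card_le_prod _ _ _ fun p hp => (mem_filter.1 hp).2.le
    _ ≤ ∏ p ∈ n.primeFactors, p := prod_le_prod_of_subset_of_one_le' (filter_subset _ _)
        fun p hp _ => (Nat.prime_of_mem_primeFactors hp).one_le
    _ ≤ n := Nat.le_of_dvd (Nat.pos_of_ne_zero hn) (Nat.prod_primeFactors_dvd n)

-- Double counting: each `x + i` has at most `log_k (x + k)` prime factors exceeding `k`.
lemma sum_card_dvdShifts_le {x k : ℕ} (hx : 0 < x) (hk : 1 < k) {Q : Finset ℕ}
    (hQ : ∀ p ∈ Q, p.Prime ∧ k < p) :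
    ∑ p ∈ Q, #(dvdShifts x k p) ≤ (k + 1) * Nat.log k (x + k) := by
  calc ∑ p ∈ Q, #(dvdShifts x k p)
      = ∑ i ∈ range (k + 1), #{p ∈ Q | p ∣ x + i} :=
        sum_card_bipartiteAbove_eq_sum_card_bipartiteBelow (r := fun p i => p ∣ x + i)
    _ ≤ ∑ i ∈ range (k + 1), Nat.log k (x + k) := by
        refine sum_le_sum fun i hi => ?_
        calc #{p ∈ Q | p ∣ x + i} ≤ #{p ∈ (x + i).primeFactors | k < p} := by
              refine card_le_card fun p hp => ?_
              obtain ⟨hpQ, hpx⟩ := mem_filter.1 hp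
              exact mem_filter.2 ⟨Nat.mem_primeFactors.2 ⟨(hQ p hpQ).1, hpx, by omega⟩,
                (hQ p hpQ).2⟩
          _ ≤ Nat.log k (x + i) := card_primeFactors_filter_lt_le hk _
          _ ≤ Nat.log k (x + k) := Nat.log_mono_right (by have := mem_range.1 hi; omega)
    _ = (k + 1) * Nat.log k (x + k) := by simp

-- Telescoping: `1 / n ^ 2 ≤ 2 / (2n - 1) - 2 / (2n + 1)`.
lemma sum_Icc_two_inv_sq_le_sub (k : ℕ) :
    ∑ n ∈ Icc 2 (k + 1), 1 / (n : ℝ) ^ 2 ≤ 2 / 3 - 2 / (2 * (k : ℝ) + 3) := by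
  induction k with
  | zero => norm_num
  | succ k ih =>
    rw [sum_Icc_succ_top (by omega)]
    have hstep : 1 / ((k : ℝ) + 1 + 1) ^ 2 ≤ 2 / (2 * k + 3) - 2 / (2 * ((k : ℝ) + 1) + 3) := by
      rw [div_sub_div _ _ (by positivity) (by positivity), div_le_div_iff₀ (by positivity)
        (by positivity)]
      nlinarith
    push_cast at ih ⊢
    linarith

lemma sum_Icc_two_inv_sq_le (k : ℕ) : ∑ n ∈ Icc 2 k, 1 / (n : ℝ) ^ 2 ≤ 2 / 3 := by
  rcases k with _ | k
  · norm_num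
  · linarith [sum_Icc_two_inv_sq_le_sub k, show (0 : ℝ) ≤ 2 / (2 * k + 3) by positivity]

lemma three_mul_sum_sq_div_le (k : ℕ) : 3 * ∑ n ∈ Icc 2 k, (k / n) ^ 2 ≤ 2 * k ^ 2 := by
  have hreal : ∑ n ∈ Icc 2 k, ((k / n : ℕ) : ℝ) ^ 2 ≤ (k : ℝ) ^ 2 * (2 / 3) :=
    calc ∑ n ∈ Icc 2 k, ((k / n : ℕ) : ℝ) ^ 2
        ≤ ∑ n ∈ Icc 2 k, (k : ℝ) ^ 2 * (1 / (n : ℝ) ^ 2) := by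
          refine sum_le_sum fun n _ => ?_
          rw [← div_eq_mul_one_div, ← div_pow]
          gcongr
          exact Nat.cast_div_le
      _ = (k : ℝ) ^ 2 * ∑ n ∈ Icc 2 k, 1 / (n : ℝ) ^ 2 := (mul_sum _ _ _).symm
      _ ≤ (k : ℝ) ^ 2 * (2 / 3) := by gcongr; exact sum_Icc_two_inv_sq_le k
  exact_mod_cast (by linarith : 3 * ∑ n ∈ Icc 2 k, ((k / n : ℕ) : ℝ) ^ 2 ≤ 2 * (k : ℝ) ^ 2)

-- `8 (a + 1) ^ 2 ≤ 9 a ^ 2 + 72` trades the linear terms for a slightly larger leading constant.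
lemma eight_mul_sum_sq_div_add_one_le (k : ℕ) :
    8 * ∑ n ∈ Icc 2 k, (k / n + 1) ^ 2 ≤ 6 * k ^ 2 + 72 * k := by
  have hcard : #(Icc 2 k) ≤ k := by simp only [Nat.card_Icc]; omega
  calc 8 * ∑ n ∈ Icc 2 k, (k / n + 1) ^ 2
      ≤ ∑ n ∈ Icc 2 k, (9 * (k / n) ^ 2 + 72) := by
        rw [mul_sum]
        exact sum_le_sum fun n _ => by nlinarith [sq_nonneg ((k / n : ℤ) - 8)]
    _ = 3 * (3 * ∑ n ∈ Icc 2 k, (k / n) ^ 2) + 72 * #(Icc 2 k) := by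
        rw [sum_add_distrib, ← mul_sum, sum_const, smul_eq_mul]; ring
    _ ≤ 6 * k ^ 2 + 72 * k := by nlinarith [three_mul_sum_sq_div_le k]

lemma sq_le_sum_card_dvdShifts_mul {x y k : ℕ} (hx : 0 < x)
    (h : ∀ i ≤ k, ∀ j ≤ k, ¬ Nat.Coprime (x + i) (y + j)) :
    (k + 1) ^ 2 ≤ ∑ p ∈ range (x + k + 1) with p.Prime, #(dvdShifts x k p) * #(dvdShifts y k p) :=
  calc (k + 1) ^ 2 = #(range (k + 1) ×ˢ range (k + 1)) := by simp [sq]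
    _ ≤ #((range (x + k + 1)).filter Nat.Prime |>.biUnion
          fun p => dvdShifts x k p ×ˢ dvdShifts y k p) := by
        refine card_le_card fun ⟨i, j⟩ hij => ?_
        simp only [mem_product, mem_range] at hij
        obtain ⟨p, hp, hpx, hpy⟩ :=
          Nat.Prime.not_coprime_iff_dvd.1 (h i (by omega) j (by omega))
        have hpx_le := Nat.le_of_dvd (by omega) hpx
        simp only [mem_biUnion, mem_product, dvdShifts, mem_filter, mem_range]
        exact ⟨p, ⟨by omega, hp⟩, ⟨hij.1, hpx⟩, hij.2, hpy⟩
    _ ≤ _ := card_biUnion_le.trans_eq (by simp only [card_product])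

theorem exists_coprime_add_of_log_le {x k : ℕ} (y : ℕ) (hx : 0 < x) (hk : 58 ≤ k)
    (hlog : 8 * Nat.log k (x + k) ≤ k + 1) :
    ∃ i ≤ k, ∃ j ≤ k, Nat.Coprime (x + i) (y + j) := by
  by_contra! h
  set Q := (range (x + k + 1)).filter Nat.Prime
  have hsmall : ∑ p ∈ Q with p ≤ k, #(dvdShifts x k p) * #(dvdShifts y k p)
      ≤ ∑ n ∈ Icc 2 k, (k / n + 1) ^ 2 :=
    calc _ ≤ ∑ p ∈ Q with p ≤ k, (k / p + 1) ^ 2 := sum_le_sum fun p _ => by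
          rw [sq]; exact Nat.mul_le_mul (card_dvdShifts_le x k p) (card_dvdShifts_le y k p)
      _ ≤ _ := sum_le_sum_of_subset fun p hp => by
          simp only [Q, mem_filter] at hp
          exact mem_Icc.2 ⟨hp.1.2.two_le, hp.2⟩
  have hlarge : ∑ p ∈ Q with ¬ p ≤ k, #(dvdShifts x k p) * #(dvdShifts y k p)
      ≤ (k + 1) * Nat.log k (x + k) :=
    calc _ ≤ ∑ p ∈ Q with ¬ p ≤ k, #(dvdShifts x k p) := sum_le_sum fun p hp =>
          mul_le_of_le_one_right' (card_dvdShifts_le_one y (by simpa using (mem_filter.1 hp).2))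
      _ ≤ _ := sum_card_dvdShifts_le hx (by omega) fun p hp => by
          simp only [Q, mem_filter] at hp
          exact ⟨hp.1.2, by omega⟩
  have hcover := sq_le_sum_card_dvdShifts_mul hx h
  rw [← sum_filter_add_sum_filter_not Q (· ≤ k)] at hcover
  -- `8 (k + 1)² ≤ 6 k² + 72 k + (k + 1)²` fails once `k ≥ 58`.
  nlinarith [eight_mul_sum_sq_div_add_one_le k]

lemma sixteen_mul_sqrt_le {L : ℝ} (hL : 1 < L) : 16 * √L ≤ 32 * L / log L := by
  have hlog : log L ≤ 2 * √L := by
    have h := log_le_rpow_div (x := L) (ε := 1 / 2) (by linarith) (by norm_num)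
    rw [← sqrt_eq_rpow] at h
    linarith
  rw [le_div_iff₀ (log_pos hL)]
  nlinarith [sq_sqrt (show 0 ≤ L by linarith), sqrt_nonneg L]

lemma natLog_add_le {b n : ℕ} (hb : 2 ≤ b) (hn : 2 ≤ n) :
    Nat.log b (n + b) ≤ Nat.log b n + 1 :=
  calc Nat.log b (n + b) ≤ Nat.log b (n * b) := Nat.log_mono_right (by nlinarith)
    _ = Nat.log b n + 1 := Nat.log_mul_base (by omega) (by omega)

lemma eight_mul_natLog_add_le {x k : ℕ} (hx : 2 ≤ x) (hk : 2 ≤ k) (hL : 1 < log x)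
    (hsq : log x ≤ k ^ 2) (hlt : 32 * log x / log (log x) < k + 1) :
    8 * Nat.log k (x + k) ≤ k + 1 := by
  rw [mul_div_assoc] at hlt
  have hlogL : 0 < log (log x) := log_pos hL
  have hhalf : 1 / 2 ≤ log x / log (log x) := by
    rw [le_div_iff₀ hlogL]
    linarith [log_le_sub_one_of_pos (show 0 < log x by linarith)]
  have hnat : (Nat.log k x : ℝ) ≤ 2 * (log x / log (log x)) :=
    calc (Nat.log k x : ℝ) ≤ log x / log k := natLog_le_logb x k
      _ ≤ 2 * (log x / log (log x)) := by
        have hlogk : log (log x) ≤ 2 * log k := by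
          simpa [log_pow] using log_le_log (by linarith) hsq
        rw [← mul_div_assoc, div_le_div_iff₀ (log_pos (by exact_mod_cast hk)) hlogL]
        nlinarith
  have : 8 * (Nat.log k x + 1) < k + 1 := by
    exact_mod_cast (by linarith : (8 * (Nat.log k x + 1) : ℝ) < k + 1)
  linarith [natLog_add_le hk hx]

/-- Erdős, Theorem B: there is c > 0 such that for all sufficiently large x and all y ≥ x
    there exist 0 ≤ i, j ≤ c·log x / log log x with gcd(x+i, y+j) = 1. -/
theorem erdos_theorem_B :
    ∃ c : ℝ, 0 < c ∧ ∃ N : ℕ, ∀ x y : ℕ, N ≤ x → x ≤ y →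
      ∃ i j : ℕ,
        (i : ℝ) ≤ c * Real.log x / Real.log (Real.log x) ∧
        (j : ℝ) ≤ c * Real.log x / Real.log (Real.log x) ∧
        Nat.gcd (x + i) (y + j) = 1 := by
  refine ⟨32, by norm_num, ⌈exp 64⌉₊, fun x y hNx _ => ?_⟩
  have hexp : exp 64 ≤ x := (Nat.le_ceil _).trans (by exact_mod_cast hNx)
  have hx : 2 ≤ x := by exact_mod_cast (by linarith [add_one_le_exp 64] : (2 : ℝ) ≤ x)
  have hL : 64 ≤ log x := (le_log_iff_exp_le (by positivity)).2 hexp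
  set k := ⌊32 * log x / log (log x)⌋₊
  have hk : 32 * log x / log (log x) < k + 1 := Nat.lt_floor_add_one _
  have hk_sqrt : 16 * √(log x) < k + 1 := (sixteen_mul_sqrt_le (by linarith)).trans_lt hk
  have hsqrt : 8 ≤ √(log x) := le_sqrt_of_sq_le (by linarith)
  have hk58 : 58 ≤ k := by exact_mod_cast (by linarith : (58 : ℝ) ≤ k)
  have hsq : log x ≤ k ^ 2 := by nlinarith [sq_sqrt (show 0 ≤ log x by linarith)]
  obtain ⟨i, hi, j, hj, hij⟩ := exists_coprime_add_of_log_le y (by omega) hk58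
    (eight_mul_natLog_add_le hx (by omega) (by linarith) hsq hk)
  have hkle : (k : ℝ) ≤ 32 * log x / log (log x) :=
    Nat.floor_le (div_pos (by linarith) (log_pos (by linarith))).le
  exact ⟨i, j, le_trans (by exact_mod_cast hi) hkle, le_trans (by exact_mod_cast hj) hkle, hij⟩
end

section
/- Under the hypotheses of Moshchevitin's construction, the partial sums b_kα − c_k of the series defining η satisfy |η − (b_kα − c_k)| < (1/2 + 1/(2W_k))·(1/v_k) for all k. -/
private lemma aux_mono {c c' A v0 v1 x y : ℝ} (hc : 1 ≤ c) (hc' : c' ≤ A)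
    (hA : 0 ≤ A) (hv0 : 0 < v0) (hv1 : 0 < v1) (hy : 0 < y)
    (hid : v1 * x + v0 * y = 1) (hbound : (A * v1 + v0) * y ≤ 1) :
    c' * y ≤ c * x := by
  nlinarith [mul_nonneg (sub_nonneg.mpr hc') (mul_nonneg hy.le hv1.le),
    mul_nonneg (sub_nonneg.mpr hc) (mul_nonneg hA (mul_nonneg hv1.le hy.le)),
    mul_nonneg (by linarith : (0:ℝ) ≤ c) (sub_nonneg.mpr hbound), hv1.le]

private lemma aux_step2 {c A p w v0 v1 : ℝ} (hv0 : 0 < v0) (hv1 : 0 < v1)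
    (hw : 0 < w) (h2c : 2 * c ≤ A + p) (hwp : w * p ≤ A) (hvk : A * v0 ≤ v1) :
    c * (2 * w * v0) ≤ (w + 1) * v1 := by
  nlinarith [mul_nonneg (mul_nonneg hv0.le hw.le) (sub_nonneg.mpr h2c),
    mul_nonneg hv0.le (sub_nonneg.mpr hwp),
    mul_nonneg (by linarith : (0:ℝ) ≤ w + 1) (sub_nonneg.mpr hvk)]

/-- Upper bound |η − (b_kα − c_k)| < (1/2 + 1/(2W_k))·(1/v_k) in Moshchevitin's
    construction. -/
theorem eta_upper_bound
    (α : ℝ) (hα : Irrational α) (a : ℕ → ℕ) (u : ℕ → ℤ) (v P Q lam W : ℕ → ℕ)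
    (ha : ∀ j, 1 ≤ j → 1 ≤ a j)
    (hv0 : v 0 = 1) (hv1 : v 1 = a 1)
    (hvrec : ∀ k, 1 ≤ k → v (k + 1) = a (k + 1) * v k + v (k - 1))
    (hvpos : ∀ k, 0 < v k)
    -- u_k/v_k are the convergents of α:
    (hconv : ∀ j, 1 / ((v (j + 1) : ℝ) + (v j : ℝ)) ≤ |(v j : ℝ) * α - (u j : ℝ)| ∧
      |(v j : ℝ) * α - (u j : ℝ)| ≤ 1 / (v (j + 1) : ℝ))
    (hsign : ∀ j, 0 < (-1 : ℝ) ^ j * ((v j : ℝ) * α - (u j : ℝ)))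
    (hPpos : ∀ l, 0 < P l) (hQpos : ∀ l, 0 < Q l) (hlampos : ∀ j, 0 < lam j)
    (hPQ : ∀ l, P (l + 1) = P l * Q (l + 1))
    -- |λ_{k+1} − a_{k+1}/(2 P_{[k/2]})| ≤ Q_{[k/2]+1}/2:
    (hlam : ∀ k, |(lam (k + 1) : ℝ) - (a (k + 1) : ℝ) / (2 * (P (k / 2) : ℝ))| ≤
      (Q (k / 2 + 1) : ℝ) / 2)
    -- a_{k+1} ≥ W_k · P_{[k/2]+1}:
    (haW : ∀ k, W k * P (k / 2 + 1) ≤ a (k + 1))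
    (hWtend : Filter.Tendsto W Filter.atTop Filter.atTop) (hWpos : ∀ k, 0 < W k)
    (b : ℕ → ℕ) (c : ℕ → ℤ)
    (hb : ∀ k, b k = ∑ j ∈ Finset.range k, P (j / 2) * lam (j + 1) * v j)
    (hc : ∀ k, c k = ∑ j ∈ Finset.range k, (P (j / 2) : ℤ) * (lam (j + 1) : ℤ) * u j)
    (η : ℝ)
    (hη : HasSum (fun j : ℕ => (P (j / 2) : ℝ) * (lam (j + 1) : ℝ) *
      ((v j : ℝ) * α - (u j : ℝ))) η)
    :
    ∀ k, |η - ((b k : ℝ) * α - (c k : ℝ))| <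
      (1 / 2 + 1 / (2 * (W k : ℝ))) * (1 / (v k : ℝ)) := by
  set t : ℕ → ℝ := fun j : ℕ => (P (j / 2) : ℝ) * (lam (j + 1) : ℝ) *
      ((v j : ℝ) * α - (u j : ℝ)) with ht
  set ε : ℕ → ℝ := fun j => (-1 : ℝ) ^ j * ((v j : ℝ) * α - (u j : ℝ)) with hε
  have hεpos : ∀ j, 0 < ε j := hsign
  have hvposR : ∀ j, (0:ℝ) < (v j : ℝ) := fun j => by exact_mod_cast hvpos j
  have habs : ∀ j, |(v j : ℝ) * α - (u j : ℝ)| = ε j := by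
    intro j
    have h := abs_of_pos (hεpos j)
    rw [hε] at h
    simpa [abs_mul, abs_pow] using h
  have hεle : ∀ j, ε j ≤ 1 / (v (j + 1) : ℝ) := fun j => (habs j) ▸ (hconv j).2
  have hεv : ∀ j, (v (j + 1) : ℝ) * ε j ≤ 1 := by
    intro j
    have h := hεle j
    have hv := hvposR (j+1)
    calc (v (j + 1) : ℝ) * ε j ≤ (v (j + 1) : ℝ) * (1 / (v (j+1) : ℝ)) :=
          mul_le_mul_of_nonneg_left h hv.le
      _ = 1 := by field_simp
  have hvrecR : ∀ j : ℕ, (v (j + 2) : ℝ) = (a (j + 2) : ℝ) * (v (j + 1) : ℝ) + (v j : ℝ) := by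
    intro j
    have h := hvrec (j + 1) (Nat.le_add_left 1 j)
    push_cast [h]
    ring
  -- the key exact identity  v_{j+1} ε_j + v_j ε_{j+1} = 1
  have hid : ∀ j, (v (j + 1) : ℝ) * ε j + (v j : ℝ) * ε (j + 1) = 1 := by
    intro j
    set D : ℤ := (-1)^(j+1) * ((v (j + 1) : ℤ) * u j - (v j : ℤ) * u (j + 1)) with hD
    have hDR : (D : ℝ) = (v (j + 1) : ℝ) * ε j + (v j : ℝ) * ε (j + 1) := by
      rw [hD, hε]
      push_cast
      ring
    have hpos : (0:ℝ) < (D:ℝ) := by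
      rw [hDR]
      have h1 := hεpos j; have h2 := hεpos (j+1)
      have h3 := hvposR j; have h4 := hvposR (j+1)
      positivity
    have hvlt : (v j : ℝ) < (v (j + 2) : ℝ) := by
      have haR : (1:ℝ) ≤ (a (j + 2) : ℝ) := by exact_mod_cast ha (j+2) (by omega)
      have h := hvrecR j
      nlinarith [hvposR (j+1)]
    have h1 : (v (j + 1) : ℝ) * ε j ≤ 1 := hεv j
    have h2 : (v j : ℝ) * ε (j + 1) < 1 := by
      have h := hεle (j+1)
      have hv2 := hvposR (j+2)
      calc (v j : ℝ) * ε (j + 1) ≤ (v j : ℝ) * (1 / (v (j+2) : ℝ)) :=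
            mul_le_mul_of_nonneg_left h (hvposR j).le
        _ < 1 := by
            rw [mul_one_div, div_lt_one hv2]; exact hvlt
    have hlt2 : (D:ℝ) < 2 := by rw [hDR]; linarith
    have hD1 : D = 1 := by
      have h0 : (0:ℤ) < D := by exact_mod_cast hpos
      have h2' : D < 2 := by exact_mod_cast hlt2
      omega
    rw [← hDR, hD1]; norm_num
  set g : ℕ → ℝ := fun j => (P (j / 2) : ℝ) * (lam (j + 1) : ℝ) * ε j with hg
  have hgpos : ∀ j, 0 < g j := by
    intro j
    have h0 := hεpos j
    have h1 : (0:ℝ) < (P (j/2) : ℝ) := by exact_mod_cast hPpos (j/2)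
    have h2 : (0:ℝ) < (lam (j+1) : ℝ) := by exact_mod_cast hlampos (j+1)
    rw [hg]
    positivity
  have hsq : ∀ j : ℕ, ((-1:ℝ)^j) * ((-1:ℝ)^j) = 1 := by
    intro j; rw [← mul_pow]; norm_num
  have htg : ∀ j, t j = (-1:ℝ)^j * g j := by
    intro j
    rw [ht, hg, hε]
    dsimp only
    linear_combination (-((P (j / 2) : ℝ) * (lam (j + 1) : ℝ) *
      ((v j : ℝ) * α - (u j : ℝ)))) * hsq j
  -- coefficient bounds
  have hcoeff : ∀ k : ℕ, (P (k/2) : ℝ) * (lam (k+1) : ℝ) ≤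
      ((a (k+1) : ℝ) + (P (k/2 + 1) : ℝ)) / 2 := by
    intro k
    have h := (abs_le.mp (hlam k)).2
    have hPp : (0:ℝ) < (P (k/2) : ℝ) := by exact_mod_cast hPpos (k/2)
    have hPQ' : (P (k/2 + 1) : ℝ) = (P (k/2) : ℝ) * (Q (k/2 + 1) : ℝ) := by
      exact_mod_cast congrArg (Nat.cast : ℕ → ℝ) (hPQ (k/2))
    have hsimp : (P (k/2) : ℝ) * ((a (k+1) : ℝ) / (2 * (P (k/2) : ℝ))) = (a (k+1) : ℝ) / 2 := by
      field_simp
    nlinarith [mul_le_mul_of_nonneg_left h hPp.le]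
  have hPa : ∀ k : ℕ, (P (k/2 + 1) : ℝ) ≤ (a (k+1) : ℝ) := by
    intro k
    have h : P (k/2 + 1) ≤ W k * P (k/2 + 1) := Nat.le_mul_of_pos_left _ (hWpos k)
    exact_mod_cast h.trans (haW k)
  have hcge1 : ∀ k : ℕ, (1:ℝ) ≤ (P (k/2) : ℝ) * (lam (k+1) : ℝ) := by
    intro k
    have h : 1 ≤ P (k/2) * lam (k+1) := Nat.one_le_iff_ne_zero.mpr
      (Nat.mul_ne_zero (hPpos (k/2)).ne' (hlampos (k+1)).ne')
    exact_mod_cast h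
  -- monotonicity of g
  have hmono : ∀ j, g (j + 1) ≤ g j := by
    intro j
    have hc' : (P ((j+1)/2) : ℝ) * (lam (j+2) : ℝ) ≤ (a (j+2) : ℝ) := by
      have h1 := hcoeff (j+1)
      have h2 := hPa (j+1)
      linarith
    have hbound : ((a (j+2) : ℝ) * (v (j+1) : ℝ) + (v j : ℝ)) * ε (j+1) ≤ 1 := by
      have h := hεv (j+1)
      rw [hvrecR j] at h
      exact h
    have haR : (0:ℝ) ≤ (a (j+2) : ℝ) := by positivity
    rw [hg]
    dsimp only
    exact aux_mono (hcge1 j) hc' haR (hvposR j) (hvposR (j+1)) (hεpos (j+1))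
      (hid j) hbound
  -- strict bound  g k < (1/2 + 1/(2 W_k)) / v_k
  have hgB : ∀ k, g k < (1 / 2 + 1 / (2 * (W k : ℝ))) * (1 / (v k : ℝ)) := by
    intro k
    have hWR : (0:ℝ) < (W k : ℝ) := by exact_mod_cast hWpos k
    have hεk : ε k < 1 / (v (k+1) : ℝ) := by
      have h := hid k
      have h2 := mul_pos (hvposR k) (hεpos (k+1))
      rw [lt_div_iff₀ (hvposR (k+1))]
      nlinarith
    have hcpos : (0:ℝ) < (P (k/2) : ℝ) * (lam (k+1) : ℝ) := by linarith [hcge1 k]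
    have step1 : g k < ((P (k/2) : ℝ) * (lam (k+1) : ℝ)) / (v (k+1) : ℝ) := by
      rw [hg]; dsimp only
      rw [div_eq_mul_one_div]
      exact mul_lt_mul_of_pos_left hεk hcpos
    have hvk1 : (a (k+1) : ℝ) * (v k : ℝ) ≤ (v (k+1) : ℝ) := by
      match k with
      | 0 => norm_num [hv0, hv1]
      | Nat.succ m =>
        have h := hvrecR m
        nlinarith [hvposR m]
    have hWP : (W k : ℝ) * (P (k/2 + 1) : ℝ) ≤ (a (k+1) : ℝ) := by
      exact_mod_cast haW k
    have hRHS : (1 / 2 + 1 / (2 * (W k : ℝ))) * (1 / (v k : ℝ)) =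
        ((W k : ℝ) + 1) / (2 * (W k : ℝ) * (v k : ℝ)) := by
      field_simp
    have h2c : 2 * ((P (k/2) : ℝ) * (lam (k+1) : ℝ)) ≤ (a (k+1) : ℝ) + (P (k/2+1) : ℝ) := by
      have := hcoeff k; linarith
    have step2 : ((P (k/2) : ℝ) * (lam (k+1) : ℝ)) / (v (k+1) : ℝ) ≤
        ((W k : ℝ) + 1) / (2 * (W k : ℝ) * (v k : ℝ)) := by
      rw [div_le_div_iff₀ (hvposR (k+1)) (by exact mul_pos (mul_pos two_pos hWR) (hvposR k))]
      exact aux_step2 (hvposR k) (hvposR (k+1)) hWR h2c hWP hvk1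
    rw [hRHS]
    exact step1.trans_le step2
  -- now the alternating tail estimate
  intro k
  set S : ℝ := ∑ j ∈ Finset.range k, t j with hS
  have hbc : (b k : ℝ) * α - (c k : ℝ) = S := by
    rw [hS, hb, hc, ht]
    push_cast
    rw [Finset.sum_mul, ← Finset.sum_sub_distrib]
    exact Finset.sum_congr rfl fun j _ => by ring
  have htail : HasSum (fun n => t (n + k)) (η - S) := by
    rw [hasSum_nat_add_iff k]
    have h' : η - S + ∑ i ∈ Finset.range k, t i = η := by
      rw [← hS]; ring
    rw [h']
    exact hη
  have hps : Filter.Tendsto (fun n => ∑ j ∈ Finset.range n, t (j + k))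
      Filter.atTop (nhds (η - S)) := htail.tendsto_sum_nat
  set A : ℕ → ℝ := fun n => (-1:ℝ)^k * ∑ j ∈ Finset.range n, t (j + k) with hA
  have hAt : Filter.Tendsto A Filter.atTop (nhds ((-1:ℝ)^k * (η - S))) := hps.const_mul _
  have hstep : ∀ n, A (n + 1) = A n + (-1:ℝ)^n * g (n + k) := by
    intro n
    have hpow : (-1:ℝ)^k * (-1:ℝ)^(n+k) = (-1:ℝ)^n := by
      rw [pow_add]
      linear_combination ((-1:ℝ)^n) * hsq k
    rw [hA]
    dsimp only
    rw [Finset.sum_range_succ, mul_add, htg (n + k), ← mul_assoc, hpow]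
  have hkey : ∀ m : ℕ, (0 ≤ A (2*m) ∧ A (2*m) ≤ g k) ∧
      (0 ≤ A (2*m+1) ∧ A (2*m+1) ≤ g k) := by
    intro m
    induction m with
    | zero =>
      have h0 : A 0 = 0 := by rw [hA]; simp
      have h1 : A 1 = g k := by
        have h := hstep 0
        rw [h0] at h
        simpa using h
      exact ⟨⟨by rw [h0], by rw [h0]; exact (hgpos k).le⟩,
        ⟨by rw [h1]; exact (hgpos k).le, by rw [h1]⟩⟩
    | succ m ih =>
      obtain ⟨⟨he0, he1⟩, ho0, ho1⟩ := ih
      have hodd : ((-1:ℝ)) ^ (2*m+1) = -1 := Odd.neg_one_pow ⟨m, rfl⟩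
      have heven2 : ((-1:ℝ)) ^ (2*m+2) = 1 := Even.neg_one_pow ⟨m+1, by ring⟩
      have heven0 : ((-1:ℝ)) ^ (2*m) = 1 := Even.neg_one_pow ⟨m, by ring⟩
      have hs1 : A (2*m+2) = A (2*m+1) - g (2*m+1+k) := by
        have h := hstep (2*m+1)
        rw [hodd] at h
        linarith [h]
      have hs2 : A (2*m+3) = A (2*m+2) + g (2*m+2+k) := by
        have h := hstep (2*m+2)
        rw [heven2] at h
        linarith [h]
      have hs0 : A (2*m+1) = A (2*m) + g (2*m+k) := by
        have h := hstep (2*m)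
        rw [heven0] at h
        linarith [h]
      have hm1 : g (2*m+1+k) ≤ g (2*m+k) := by
        have h := hmono (2*m+k)
        have hidx : 2*m+k+1 = 2*m+1+k := by omega
        rwa [hidx] at h
      have hm2 : g (2*m+2+k) ≤ g (2*m+1+k) := by
        have h := hmono (2*m+1+k)
        have hidx : 2*m+1+k+1 = 2*m+2+k := by omega
        rwa [hidx] at h
      have hidx2 : 2*(m+1) = 2*m+2 := by ring
      have hidx3 : 2*(m+1)+1 = 2*m+3 := by ring
      constructor
      · rw [hidx2]
        exact ⟨by rw [hs1, hs0]; linarith,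
          by rw [hs1]; linarith [(hgpos (2*m+1+k)).le]⟩
      · rw [hidx3]
        exact ⟨by rw [hs2, hs1, hs0]; linarith [(hgpos (2*m+2+k)).le],
          by rw [hs2, hs1]; linarith⟩
  have hbound : ∀ n, 0 ≤ A n ∧ A n ≤ g k := by
    intro n
    rcases Nat.even_or_odd n with ⟨m, hm⟩ | ⟨m, hm⟩
    · have hn : n = 2*m := by omega
      rw [hn]; exact (hkey m).1
    · have hn : n = 2*m+1 := by omega
      rw [hn]; exact (hkey m).2
  have hlim0 : 0 ≤ (-1:ℝ)^k * (η - S) :=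
    ge_of_tendsto' hAt (fun n => (hbound n).1)
  have hlimg : (-1:ℝ)^k * (η - S) ≤ g k :=
    le_of_tendsto' hAt (fun n => (hbound n).2)
  have habs2 : |η - S| = (-1:ℝ)^k * (η - S) := by
    have h1 : |(-1:ℝ)^k * (η - S)| = |η - S| := by
      rw [abs_mul, abs_pow, abs_neg, abs_one, one_pow, one_mul]
    rw [← h1, abs_of_nonneg hlim0]
  rw [hbc, habs2]
  exact hlimg.trans_lt (hgB k)
end

section
/- Under the hypotheses of Moshchevitin's construction with W_k ≥ 8, one has the lower bound |η − (b_kα − c_k)| > (1/2 − 2/W_k)·(1/v_k) for all k. -/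
/-!
The difference `η - (b_k α - c_k)` is the tail `∑_{j ≥ k} f_j` of the series defining `η`,
where `f_j = P_{[j/2]} λ_{j+1} (v_j α - u_j)`. The hypothesis on `λ_{j+1}` makes the weight
`P_{[j/2]} λ_{j+1}` equal to `a_{j+1}/2` up to a relative error `1/W_j`, so together with
`1/(v_{j+1} + v_j) ≤ |v_j α - u_j| ≤ 1/v_{j+1}` and `v_{j+1} ≈ a_{j+1} v_j` the term `f_k`
has size about `1/(2 v_k)`. Since `a_{j+1} ≥ 8`, the denominators grow at least like `8^j`, so the
remaining tail `∑_{j > k} f_j` is at most `9/(14 v_{k+1}) ≤ 9/(14 a_{k+1} v_k)`, which is small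
compared with `f_k`.
-/

open Finset

section Continuant

variable {a v : ℕ → ℕ}

theorem mul_le_succ_of_continuant (hv0 : v 0 = 1) (hv1 : v 1 = a 1)
    (hvrec : ∀ k, 1 ≤ k → v (k + 1) = a (k + 1) * v k + v (k - 1)) (j : ℕ) :
    a (j + 1) * v j ≤ v (j + 1) := by
  cases j with
  | zero => simp [hv0, hv1]
  | succ j =>
    rw [hvrec (j + 1) j.succ_pos]
    exact Nat.le_add_right _ _

theorem succ_le_add_inv_mul_of_continuant (hv0 : v 0 = 1) (hv1 : v 1 = a 1)
    (hvrec : ∀ k, 1 ≤ k → v (k + 1) = a (k + 1) * v k + v (k - 1))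
    {c : ℕ} (hc : 0 < c) (hgrow : ∀ j, c * v j ≤ v (j + 1)) (k : ℕ) :
    (v (k + 1) : ℝ) ≤ (a (k + 1) + 1 / c) * v k := by
  cases k with
  | zero =>
    simp only [hv0, hv1, zero_add, Nat.cast_one, mul_one]
    have : (0 : ℝ) ≤ 1 / c := by positivity
    linarith
  | succ k =>
    have hprev : (v k : ℝ) ≤ 1 / c * v (k + 1) := by
      rw [one_div_mul_eq_div, le_div_iff₀ (by positivity), mul_comm]
      exact_mod_cast hgrow k
    rw [hvrec (k + 1) k.succ_pos, Nat.add_sub_cancel]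
    push_cast
    linarith

theorem pow_mul_le_of_mul_le_succ {c : ℕ} (hgrow : ∀ j, c * v j ≤ v (j + 1)) (m n : ℕ) :
    c ^ n * v m ≤ v (m + n) := by
  induction n with
  | zero => simp
  | succ n ih =>
    calc c ^ (n + 1) * v m = c * (c ^ n * v m) := by ring
      _ ≤ c * v (m + n) := Nat.mul_le_mul_left c ih
      _ ≤ v (m + n + 1) := hgrow _

end Continuant

theorem abs_le_of_hasSum_of_abs_le_geometric {g : ℕ → ℝ} {s C r : ℝ} (hg : HasSum g s)
    (hr0 : 0 ≤ r) (hr1 : r < 1) (hbound : ∀ n, |g n| ≤ C * r ^ n) : |s| ≤ C / (1 - r) :=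
  hg.norm_le_of_bounded ((hasSum_geometric_of_lt_one hr0 hr1).mul_left C) hbound

theorem abs_sub_sum_range_le_of_abs_le_div {f : ℕ → ℝ} {v : ℕ → ℕ} {s D : ℝ} {c : ℕ}
    (hf : HasSum f s) (hc : 1 < c) (hgrow : ∀ j, c * v j ≤ v (j + 1)) (hvpos : ∀ j, 0 < v j)
    (hfD : ∀ j, |f j| ≤ D / v j) (m : ℕ) :
    |s - ∑ j ∈ range m, f j| ≤ c * D / ((c - 1) * v m) := by
  have hD : 0 ≤ D := by
    simpa using (le_div_iff₀ (by exact_mod_cast hvpos 0)).1 ((abs_nonneg _).trans (hfD 0))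
  have hc' : (1 : ℝ) < c := by exact_mod_cast hc
  have hvm : (0 : ℝ) < v m := by exact_mod_cast hvpos m
  have hbound : ∀ n, |f (n + m)| ≤ D / v m * (1 / c) ^ n := fun n => by
    have hpow : (c : ℝ) ^ n * v m ≤ v (n + m) := by
      rw [add_comm]; exact_mod_cast pow_mul_le_of_mul_le_succ hgrow m n
    calc |f (n + m)| ≤ D / v (n + m) := hfD _
      _ ≤ D / (c ^ n * v m) := div_le_div_of_nonneg_left hD (by positivity) hpow
      _ = D / v m * (1 / c) ^ n := by rw [one_div_pow]; field_simp
  calc |s - ∑ j ∈ range m, f j| ≤ D / v m / (1 - 1 / c) :=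
        abs_le_of_hasSum_of_abs_le_geometric ((hasSum_nat_add_iff' m).2 hf) (by positivity)
          ((div_lt_one (by positivity)).2 hc') hbound
    _ = c * D / ((c - 1) * v m) := by field_simp

theorem abs_mul_sub_half_le {p l q A W : ℝ} (hp : 0 < p) (hW : 0 < W)
    (hl : |l - A / (2 * p)| ≤ q / 2) (hpq : W * (p * q) ≤ A) :
    |p * l - A / 2| ≤ A / (2 * W) := by
  have hpq' : p * q ≤ A / W := by rw [le_div_iff₀ hW]; linarith
  have hfactor : p * l - A / 2 = p * (l - A / (2 * p)) := by field_simp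
  calc |p * l - A / 2| = p * |l - A / (2 * p)| := by rw [hfactor, abs_mul, abs_of_pos hp]
    _ ≤ p * (q / 2) := mul_le_mul_of_nonneg_left hl hp.le
    _ ≤ A / (2 * W) := by rw [show A / (2 * W) = A / W / 2 by ring]; linarith

theorem half_sub_two_div_lt {A W : ℝ} (hW : 8 ≤ W) (hWA : W ≤ A) :
    1 / 2 - 2 / W < (A - A / W) / 2 / (A + 9 / 8) - 9 / (14 * A) := by
  have hW0 : 0 < W := by linarith
  have hA0 : 0 < A := by linarith
  rw [← sub_pos]
  field_simp
  nlinarith [mul_le_mul_of_nonneg_left hWA hA0.le, mul_pos hA0 hW0,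
      mul_le_mul_of_nonneg_left hW hA0.le, sq_nonneg (A - W)]

section Weight

variable {w e A W : ℝ}

theorem abs_mul_le_of_abs_sub_half_le (hw : |w - A / 2| ≤ A / (2 * W)) (hW : 8 ≤ W)
    (hA : 0 < A) {x y : ℝ} (hx : 0 < x) (hxy : A * x ≤ y) (he : |e| ≤ 1 / y) :
    |w * e| ≤ 9 / 16 / x := by
  have hAW : A / (2 * W) ≤ A / 16 := div_le_div_of_nonneg_left hA.le (by norm_num) (by linarith)
  have hw0 : 0 ≤ w := by linarith [(abs_le.1 hw).1]
  have hw' : w ≤ 9 / 16 * A := by linarith [(abs_le.1 hw).2]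
  calc |w * e| = w * |e| := by rw [abs_mul, abs_of_nonneg hw0]
    _ ≤ 9 / 16 * A * (1 / (A * x)) :=
        mul_le_mul hw' (he.trans (one_div_le_one_div_of_le (by positivity) hxy)) (abs_nonneg e)
          (by positivity)
    _ = 9 / 16 / x := by field_simp

theorem le_abs_mul_of_abs_sub_half_le (hw : |w - A / 2| ≤ A / (2 * W)) (hW : 1 ≤ W)
    (hA : 0 ≤ A) {y : ℝ} (hy : 0 < y) (he : 1 / y ≤ |e|) :
    (A - A / W) / 2 / y ≤ |w * e| := by
  have hAW : A / W ≤ A := div_le_self hA hW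
  have hw' : (A - A / W) / 2 ≤ w := by
    have := (abs_le.1 hw).1
    rw [div_mul_eq_div_div_swap] at this
    linarith
  calc (A - A / W) / 2 / y = (A - A / W) / 2 * (1 / y) := by ring
    _ ≤ w * |e| := mul_le_mul hw' he (by positivity) (by linarith)
    _ ≤ |w * e| := by
        rw [abs_mul]; exact mul_le_mul_of_nonneg_right (le_abs_self w) (abs_nonneg e)

theorem lt_abs_mul_add_of_abs_sub_half_le {t x y : ℝ} (hw : |w - A / 2| ≤ A / (2 * W))
    (hW : 8 ≤ W) (hWA : W ≤ A) (hx : 0 < x) (hAxy : A * x ≤ y) (hyx : y ≤ (A + 1 / 8) * x)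
    (he : 1 / (y + x) ≤ |e|) (ht : |t| ≤ 9 / (14 * y)) :
    (1 / 2 - 2 / W) * (1 / x) < |w * e + t| := by
  have hA : 0 < A := by linarith
  have hAW : A / W ≤ A := div_le_self hA.le (by linarith)
  have hyx_pos : 0 < y + x := add_pos ((mul_pos hA hx).trans_le hAxy) hx
  have hhead : (A - A / W) / 2 / ((A + 9 / 8) * x) ≤ |w * e| :=
    (div_le_div_of_nonneg_left (by linarith) hyx_pos (by linarith)).trans
      (le_abs_mul_of_abs_sub_half_le hw (by linarith) hA.le hyx_pos he)
  have htail : |t| ≤ 9 / (14 * (A * x)) :=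
    ht.trans (div_le_div_of_nonneg_left (by norm_num) (by positivity) (by linarith))
  calc (1 / 2 - 2 / W) * (1 / x)
      < ((A - A / W) / 2 / (A + 9 / 8) - 9 / (14 * A)) * (1 / x) :=
        mul_lt_mul_of_pos_right (half_sub_two_div_lt hW hWA) (by positivity)
    _ = (A - A / W) / 2 / ((A + 9 / 8) * x) - 9 / (14 * (A * x)) := by field_simp
    _ ≤ |w * e| - |t| := sub_le_sub hhead htail
    _ ≤ |w * e + t| := abs_sub_abs_le_abs_add _ _

end Weight

theorem eta_lower_bound_general
    (α : ℝ) (a : ℕ → ℕ) (u : ℕ → ℤ) (v P Q lam W : ℕ → ℕ)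
    (hv0 : v 0 = 1) (hv1 : v 1 = a 1)
    (hvrec : ∀ k, 1 ≤ k → v (k + 1) = a (k + 1) * v k + v (k - 1))
    (hvpos : ∀ k, 0 < v k)
    -- u_k/v_k are the convergents of α:
    (hconv : ∀ j, 1 / ((v (j + 1) : ℝ) + (v j : ℝ)) ≤ |(v j : ℝ) * α - (u j : ℝ)| ∧
      |(v j : ℝ) * α - (u j : ℝ)| ≤ 1 / (v (j + 1) : ℝ))
    (hPpos : ∀ l, 0 < P l)
    (hPQ : ∀ l, P (l + 1) = P l * Q (l + 1))
    -- |λ_{k+1} − a_{k+1}/(2 P_{[k/2]})| ≤ Q_{[k/2]+1}/2: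
    (hlam : ∀ k, |(lam (k + 1) : ℝ) - (a (k + 1) : ℝ) / (2 * (P (k / 2) : ℝ))| ≤
      (Q (k / 2 + 1) : ℝ) / 2)
    -- a_{k+1} ≥ W_k · P_{[k/2]+1}:
    (haW : ∀ k, W k * P (k / 2 + 1) ≤ a (k + 1))
    (b : ℕ → ℕ) (c : ℕ → ℤ)
    (hb : ∀ k, b k = ∑ j ∈ Finset.range k, P (j / 2) * lam (j + 1) * v j)
    (hc : ∀ k, c k = ∑ j ∈ Finset.range k, (P (j / 2) : ℤ) * (lam (j + 1) : ℤ) * u j)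
    (η : ℝ)
    (hη : HasSum (fun j : ℕ => (P (j / 2) : ℝ) * (lam (j + 1) : ℝ) *
      ((v j : ℝ) * α - (u j : ℝ))) η)
    (hW8 : ∀ k, 8 ≤ W k) :
    ∀ k, (1 / 2 - 2 / (W k : ℝ)) * (1 / (v k : ℝ)) <
      |η - ((b k : ℝ) * α - (c k : ℝ))| := by
  intro k
  set f : ℕ → ℝ := fun j => (P (j / 2) : ℝ) * lam (j + 1) * (v j * α - u j)
  have hpartial : ∀ m, (b m : ℝ) * α - c m = ∑ j ∈ range m, f j := fun m => by
    rw [hb, hc]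
    push_cast
    rw [sum_mul, ← sum_sub_distrib]
    exact sum_congr rfl fun j _ => by ring
  have hWa : ∀ j, W j ≤ a (j + 1) := fun j =>
    (Nat.le_mul_of_pos_right _ (hPpos _)).trans (haW j)
  have hW8R : ∀ j, (8 : ℝ) ≤ W j := fun j => by exact_mod_cast hW8 j
  have hWaR : ∀ j, (W j : ℝ) ≤ a (j + 1) := fun j => by exact_mod_cast hWa j
  have hweight :
      ∀ j, |(P (j / 2) : ℝ) * lam (j + 1) - a (j + 1) / 2| ≤ a (j + 1) / (2 * W j) :=
    fun j => abs_mul_sub_half_le (by exact_mod_cast hPpos _) (by linarith [hW8R j]) (hlam j)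
      (by have := haW j; rw [hPQ] at this; exact_mod_cast this)
  have hAv : ∀ j, (a (j + 1) : ℝ) * v j ≤ v (j + 1) := fun j => by
    exact_mod_cast mul_le_succ_of_continuant hv0 hv1 hvrec j
  have hgrow : ∀ j, 8 * v j ≤ v (j + 1) := fun j =>
    (Nat.mul_le_mul_right _ ((hW8 j).trans (hWa j))).trans
      (mul_le_succ_of_continuant hv0 hv1 hvrec j)
  have hvR : ∀ j, (0 : ℝ) < v j := fun j => by exact_mod_cast hvpos j
  have hterm : ∀ j, |f j| ≤ 9 / 16 / v j := fun j =>
    abs_mul_le_of_abs_sub_half_le (hweight j) (hW8R j) (by linarith [hW8R j, hWaR j]) (hvR j)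
      (hAv j) (hconv j).2
  have htail : |η - ∑ j ∈ range (k + 1), f j| ≤ 9 / (14 * v (k + 1)) :=
    (abs_sub_sum_range_le_of_abs_le_div hη (by norm_num) hgrow hvpos hterm (k + 1)).trans_eq
      (by norm_num; field_simp; ring)
  have hsplit : η - ∑ j ∈ range k, f j = f k + (η - ∑ j ∈ range (k + 1), f j) := by
    rw [sum_range_succ]; ring
  rw [hpartial, hsplit]
  exact lt_abs_mul_add_of_abs_sub_half_le (hweight k) (hW8R k) (hWaR k) (hvR k) (hAv k)
    (by exact_mod_cast succ_le_add_inv_mul_of_continuant hv0 hv1 hvrec (by norm_num) hgrow k)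
    (hconv k).1 htail

/-- Lower bound |η − (b_kα − c_k)| > (1/2 − 2/W_k)·(1/v_k) in Moshchevitin's
    construction, assuming W_k ≥ 8. -/
theorem eta_lower_bound
    (α : ℝ) (hα : Irrational α) (a : ℕ → ℕ) (u : ℕ → ℤ) (v P Q lam W : ℕ → ℕ)
    (ha : ∀ j, 1 ≤ j → 1 ≤ a j)
    (hv0 : v 0 = 1) (hv1 : v 1 = a 1)
    (hvrec : ∀ k, 1 ≤ k → v (k + 1) = a (k + 1) * v k + v (k - 1))
    (hvpos : ∀ k, 0 < v k)
    -- u_k/v_k are the convergents of α: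
    (hconv : ∀ j, 1 / ((v (j + 1) : ℝ) + (v j : ℝ)) ≤ |(v j : ℝ) * α - (u j : ℝ)| ∧
      |(v j : ℝ) * α - (u j : ℝ)| ≤ 1 / (v (j + 1) : ℝ))
    (hsign : ∀ j, 0 < (-1 : ℝ) ^ j * ((v j : ℝ) * α - (u j : ℝ)))
    (hPpos : ∀ l, 0 < P l) (hQpos : ∀ l, 0 < Q l) (hlampos : ∀ j, 0 < lam j)
    (hPQ : ∀ l, P (l + 1) = P l * Q (l + 1))
    -- |λ_{k+1} − a_{k+1}/(2 P_{[k/2]})| ≤ Q_{[k/2]+1}/2: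
    (hlam : ∀ k, |(lam (k + 1) : ℝ) - (a (k + 1) : ℝ) / (2 * (P (k / 2) : ℝ))| ≤
      (Q (k / 2 + 1) : ℝ) / 2)
    -- a_{k+1} ≥ W_k · P_{[k/2]+1}:
    (haW : ∀ k, W k * P (k / 2 + 1) ≤ a (k + 1))
    (hWtend : Filter.Tendsto W Filter.atTop Filter.atTop) (hWpos : ∀ k, 0 < W k)
    (b : ℕ → ℕ) (c : ℕ → ℤ)
    (hb : ∀ k, b k = ∑ j ∈ Finset.range k, P (j / 2) * lam (j + 1) * v j)
    (hc : ∀ k, c k = ∑ j ∈ Finset.range k, (P (j / 2) : ℤ) * (lam (j + 1) : ℤ) * u j)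
    (η : ℝ)
    (hη : HasSum (fun j : ℕ => (P (j / 2) : ℝ) * (lam (j + 1) : ℝ) *
      ((v j : ℝ) * α - (u j : ℝ))) η)
    (hW8 : ∀ k, 8 ≤ W k) :
    ∀ k, (1 / 2 - 2 / (W k : ℝ)) * (1 / (v k : ℝ)) <
      |η - ((b k : ℝ) * α - (c k : ℝ))| :=
  eta_lower_bound_general α a u v P Q lam W hv0 hv1 hvrec hvpos hconv hPpos hPQ hlam haW b c hb hc η
    hη hW8
end

section
/- In Moshchevitin's construction, the integers b_k satisfy |b_{k+1} − v_{k+1}/2| ≤ 2·P_{[k/2]+1}·v_k for all k ≥ 0; in particular b_k ≍ v_k, i.e. v_k/4 ≤ b_k ≤ v_k for large k. -/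
/-- |b_{k+1} − v_{k+1}/2| ≤ 2·P_{[k/2]+1}·v_k, and consequently b_k ≍ v_k:
    v_k/4 ≤ b_k ≤ v_k for all large k. -/
theorem b_asymp (a v P Q lam W : ℕ → ℕ) (b : ℕ → ℕ)
    (ha : ∀ j, 1 ≤ j → 1 ≤ a j)
    (hv0 : v 0 = 1) (hv1 : v 1 = a 1)
    (hvrec : ∀ k, 1 ≤ k → v (k + 1) = a (k + 1) * v k + v (k - 1))
    (hPpos : ∀ l, 0 < P l) (hQpos : ∀ l, 0 < Q l) (hlampos : ∀ j, 0 < lam j)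
    (hPQ : ∀ l, P (l + 1) = P l * Q (l + 1))
    (hlam : ∀ k, |(lam (k + 1) : ℝ) - (a (k + 1) : ℝ) / (2 * (P (k / 2) : ℝ))| ≤
      (Q (k / 2 + 1) : ℝ) / 2)
    (haW : ∀ k, W k * P (k / 2 + 1) ≤ a (k + 1))
    (hWtend : Filter.Tendsto W Filter.atTop Filter.atTop) (hWpos : ∀ k, 0 < W k)
    (hb0 : b 0 = 0)
    (hbrec : ∀ k, b (k + 1) = b k + P (k / 2) * lam (k + 1) * v k) :
    (∀ k, |(b (k + 1) : ℝ) - (v (k + 1) : ℝ) / 2| ≤ 2 * (P (k / 2 + 1) : ℝ) * (v k : ℝ)) ∧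
    (∃ K : ℕ, ∀ k, K ≤ k → (v k : ℝ) / 4 ≤ (b k : ℝ) ∧ b k ≤ v k) := by
  -- positivity of v
  have hvpos : ∀ k, 1 ≤ v k := by
    intro k
    induction k using Nat.strong_induction_on with
    | _ k ih =>
      match k with
      | 0 => simp [hv0]
      | 1 => rw [hv1]; exact ha 1 le_rfl
      | (n+2) =>
        rw [hvrec (n+1) (by omega)]
        have h1 := ih n (by omega)
        have h2 := ih (n+1) (by omega)
        have h3 := ha (n+2) (by omega)
        simp only [Nat.add_sub_cancel]
        nlinarith
  -- v is monotone
  have hvmono : Monotone v := by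
    apply monotone_nat_of_le_succ
    intro k
    match k with
    | 0 => simp [hv0, hv1]; exact ha 1 le_rfl
    | (n+1) =>
      rw [hvrec (n+1) (by omega)]
      have h1 := hvpos (n+1)
      have h3 := ha (n+2) (by omega)
      nlinarith
  -- Fibonacci-like growth
  have hvfib : ∀ k, 1 ≤ k → v k + v (k-1) ≤ v (k+1) := by
    intro k hk
    rw [hvrec k hk]
    have := hvpos k
    have := ha (k+1) (by omega)
    nlinarith
  -- P is monotone
  have hPmono : Monotone P := by
    apply monotone_nat_of_le_succ
    intro l
    rw [hPQ l]
    have := hQpos (l+1)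
    have := hPpos l
    nlinarith
  -- sum bound: ∑_{j ≤ k} v j ≤ 2 v (k+1)
  have hS2 : ∀ k, ∑ j ∈ Finset.range (k+1), v j ≤ 2 * v (k+1) := by
    intro k
    induction k using Nat.strong_induction_on with
    | _ k ih =>
      match k with
      | 0 =>
        have h := hvmono (show 0 ≤ 1 by omega)
        simp only [zero_add, Finset.sum_range_one]
        omega
      | 1 =>
        rw [Finset.sum_range_succ, Finset.sum_range_one]
        have := hvfib 1 le_rfl
        simp only [Nat.sub_self] at this
        omega
      | (n+2) =>
        rw [Finset.sum_range_succ, Finset.sum_range_succ]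
        have h1 := ih n (by omega)
        have h2 : v (n+2) + v (n+1) ≤ v (n+2+1) := by
          have := hvfib (n+2) (by omega)
          simpa using this
        have h3 := hvmono (show n+1 ≤ n+2 by omega)
        omega
  have hS3 : ∀ k, ∑ j ∈ Finset.range (k+1), v j ≤ 3 * v k := by
    intro k
    match k with
    | 0 => simp [hv0]
    | (n+1) =>
      rw [Finset.sum_range_succ]
      have := hS2 n
      omega
  -- the ε bound
  have heps : ∀ k, |((P (k/2) : ℝ) * (lam (k+1) : ℝ)) - (a (k+1) : ℝ) / 2| ≤
      (P (k/2 + 1) : ℝ) / 2 := by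
    intro k
    have hp : (0:ℝ) < (P (k/2) : ℝ) := by exact_mod_cast hPpos (k/2)
    have h := hlam k
    have key : ((P (k/2) : ℝ) * (lam (k+1) : ℝ)) - (a (k+1) : ℝ) / 2 =
        (P (k/2) : ℝ) * ((lam (k+1) : ℝ) - (a (k+1) : ℝ) / (2 * (P (k/2) : ℝ))) := by
      field_simp
    rw [key, abs_mul, abs_of_pos hp]
    have hPQ' : (P (k/2 + 1) : ℝ) = (P (k/2) : ℝ) * (Q (k/2 + 1) : ℝ) := by
      exact_mod_cast congrArg (Nat.cast : ℕ → ℝ) (hPQ (k/2))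
    rw [hPQ']
    calc (P (k/2) : ℝ) * |(lam (k+1) : ℝ) - (a (k+1) : ℝ) / (2 * (P (k/2) : ℝ))|
        ≤ (P (k/2) : ℝ) * ((Q (k/2 + 1) : ℝ) / 2) := by
          exact mul_le_mul_of_nonneg_left h (le_of_lt hp)
      _ = (P (k/2) : ℝ) * (Q (k/2 + 1) : ℝ) / 2 := by ring
  -- main induction
  have Hmain : ∀ k, |(b (k+1) : ℝ) - (v (k+1) : ℝ) / 2| ≤
      (P (k/2 + 1) : ℝ) / 2 * ((∑ j ∈ Finset.range (k+1), v j : ℕ) : ℝ)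
        + ((v k : ℝ) - 1) / 2 := by
    intro k
    induction k with
    | zero =>
      have hb1 : (b 1 : ℝ) = (P 0 : ℝ) * (lam 1 : ℝ) := by
        have := hbrec 0
        rw [hb0, hv0] at this
        push_cast [this]
        ring
      have h := heps 0
      norm_num at h
      simp only [zero_add, Nat.zero_div, Finset.sum_range_one, hv0, Nat.cast_one, hb1]
      rw [hv1]
      norm_num
      linarith
    | succ k ih =>
      have hkey : (b (k+2) : ℝ) - (v (k+2) : ℝ) / 2 =
          ((b (k+1) : ℝ) - (v (k+1) : ℝ) / 2)
          + (((P ((k+1)/2) : ℝ) * (lam (k+2) : ℝ)) - (a (k+2) : ℝ) / 2) * (v (k+1) : ℝ)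
          + ((v (k+1) : ℝ) - (v k : ℝ)) / 2 := by
        have h1 := hbrec (k+1)
        have h2 := hvrec (k+1) (by omega)
        simp only [Nat.add_sub_cancel] at h2
        rw [h1, h2]
        push_cast
        ring
      have habs : |(b (k+2) : ℝ) - (v (k+2) : ℝ) / 2| ≤
          |(b (k+1) : ℝ) - (v (k+1) : ℝ) / 2|
          + |((P ((k+1)/2) : ℝ) * (lam (k+2) : ℝ)) - (a (k+2) : ℝ) / 2| * (v (k+1) : ℝ)
          + ((v (k+1) : ℝ) - (v k : ℝ)) / 2 := by
        rw [hkey]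
        have h4 := abs_add_three ((b (k+1) : ℝ) - (v (k+1) : ℝ) / 2)
          ((((P ((k+1)/2) : ℝ) * (lam (k+2) : ℝ)) - (a (k+2) : ℝ) / 2) * (v (k+1) : ℝ))
          (((v (k+1) : ℝ) - (v k : ℝ)) / 2)
        have h5 : |(((P ((k+1)/2) : ℝ) * (lam (k+2) : ℝ)) - (a (k+2) : ℝ) / 2) * (v (k+1) : ℝ)|
            = |((P ((k+1)/2) : ℝ) * (lam (k+2) : ℝ)) - (a (k+2) : ℝ) / 2| * (v (k+1) : ℝ) := by
          rw [abs_mul, abs_of_nonneg (by positivity : (0:ℝ) ≤ (v (k+1) : ℝ))]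
        have h6 : |((v (k+1) : ℝ) - (v k : ℝ)) / 2| = ((v (k+1) : ℝ) - (v k : ℝ)) / 2 := by
          apply abs_of_nonneg
          have : (v k : ℝ) ≤ (v (k+1) : ℝ) := by exact_mod_cast hvmono (show k ≤ k+1 by omega)
          linarith
        rw [h5, h6] at h4
        exact h4
      have heps' := heps (k+1)
      have hPle : (P (k/2 + 1) : ℝ) ≤ (P ((k+1)/2 + 1) : ℝ) := by
        exact_mod_cast hPmono (by omega : k/2 + 1 ≤ (k+1)/2 + 1)
      have hSsucc : ((∑ j ∈ Finset.range (k+2), v j : ℕ) : ℝ)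
          = ((∑ j ∈ Finset.range (k+1), v j : ℕ) : ℝ) + (v (k+1) : ℝ) := by
        rw [Finset.sum_range_succ]; push_cast; ring
      have hSnn : (0:ℝ) ≤ ((∑ j ∈ Finset.range (k+1), v j : ℕ) : ℝ) := by positivity
      have hvk1 : (0:ℝ) ≤ (v (k+1) : ℝ) := by positivity
      have hvmle : (v k : ℝ) ≤ (v (k+1) : ℝ) := by
        exact_mod_cast hvmono (show k ≤ k+1 by omega)
      have hepsmul : |((P ((k+1)/2) : ℝ) * (lam (k+2) : ℝ)) - (a (k+2) : ℝ) / 2| * (v (k+1) : ℝ)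
          ≤ (P ((k+1)/2 + 1) : ℝ) / 2 * (v (k+1) : ℝ) :=
        mul_le_mul_of_nonneg_right heps' hvk1
      rw [hSsucc]
      have hPhalf : (P (k/2 + 1) : ℝ) / 2 * ((∑ j ∈ Finset.range (k+1), v j : ℕ) : ℝ)
          ≤ (P ((k+1)/2 + 1) : ℝ) / 2 * ((∑ j ∈ Finset.range (k+1), v j : ℕ) : ℝ) := by
        apply mul_le_mul_of_nonneg_right _ hSnn
        linarith
      linarith
  -- Part 1
  have part1 : ∀ k, |(b (k+1) : ℝ) - (v (k+1) : ℝ) / 2| ≤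
      2 * (P (k/2 + 1) : ℝ) * (v k : ℝ) := by
    intro k
    have h := Hmain k
    have hS := hS3 k
    have hS' : ((∑ j ∈ Finset.range (k+1), v j : ℕ) : ℝ) ≤ 3 * (v k : ℝ) := by
      exact_mod_cast hS
    have hP1 : (1:ℝ) ≤ (P (k/2 + 1) : ℝ) := by exact_mod_cast hPpos (k/2 + 1)
    have hv1' : (1:ℝ) ≤ (v k : ℝ) := by exact_mod_cast hvpos k
    calc |(b (k+1) : ℝ) - (v (k+1) : ℝ) / 2|
        ≤ (P (k/2 + 1) : ℝ) / 2 * ((∑ j ∈ Finset.range (k+1), v j : ℕ) : ℝ)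
          + ((v k : ℝ) - 1) / 2 := h
      _ ≤ (P (k/2 + 1) : ℝ) / 2 * (3 * (v k : ℝ)) + (P (k/2 + 1) : ℝ) * (v k : ℝ) / 2 := by
          have := mul_le_mul_of_nonneg_left hS' (by linarith : (0:ℝ) ≤ (P (k/2+1) : ℝ) / 2)
          nlinarith
      _ = 2 * (P (k/2 + 1) : ℝ) * (v k : ℝ) := by ring
  refine ⟨part1, ?_⟩
  -- Part 2
  obtain ⟨N, hN⟩ := (hWtend.eventually_ge_atTop 8).exists_forall_of_atTop
  refine ⟨N + 1, ?_⟩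
  intro k hk
  obtain ⟨m, rfl⟩ : ∃ m, k = m + 1 := ⟨k - 1, by omega⟩
  have hWm : 8 ≤ W m := hN m (by omega)
  have hva : a (m+1) * v m ≤ v (m+1) := by
    match m with
    | 0 => simp [hv0, hv1]
    | (n+1) => rw [hvrec (n+1) (by omega)]; omega
  have hWP : 8 * (P (m/2 + 1) * v m) ≤ v (m+1) := by
    have h1 := haW m
    calc 8 * (P (m/2 + 1) * v m) = 8 * P (m/2 + 1) * v m := by ring
      _ ≤ W m * P (m/2 + 1) * v m :=
          Nat.mul_le_mul (Nat.mul_le_mul hWm le_rfl) le_rfl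
      _ ≤ a (m+1) * v m := Nat.mul_le_mul h1 le_rfl
      _ ≤ v (m+1) := hva
  have hWP' : 2 * (P (m/2 + 1) : ℝ) * (v m : ℝ) ≤ (v (m+1) : ℝ) / 4 := by
    have : ((8 * (P (m/2 + 1) * v m) : ℕ) : ℝ) ≤ ((v (m+1) : ℕ) : ℝ) := by exact_mod_cast hWP
    push_cast at this
    linarith
  have h := part1 m
  rw [abs_le] at h
  have hvnn : (0:ℝ) ≤ (v (m+1) : ℝ) := by positivity
  constructor
  · linarith
  · have : (b (m+1) : ℝ) ≤ (v (m+1) : ℝ) := by linarith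
    exact_mod_cast this
end
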